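/- Let G(r) = Σ_{n≥0} a_n r^n be a power series with non-negative coefficients, let r ≥ 1 be in the domain where all quantities considered are defined, and suppose F_k(r) = Σ_{j=0}^k f_{j,k} r^{k+j-1} G^{(j)}(r) with f_{j,k} as in the standard recursion (f_{0,k}=k!, f_{k,k}=1, f_{j,k+1}=f_{j-1,k}+(k+j+1)f_{j,k}) and F_k(r) = k! r^{k-1} I^(k)(r) for some non-negative quantities I^(k)(r). Then: G^{(k)}(r)/k! grows at most exponentially in k (i.e., there exist c₁ ≥ 0 and C₁ > 1 with G^{(k)}(r)/k! ≤ c₁C₁^k for all k) if and only if I^(k)(r) grows at most exponentially in k. -/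

import Mathlib

/-!
Since `f_{k,k} = 1` and all terms are non-negative, the `j = k` term already bounds `F_k`
from below, which gives `G^{(k)}/k! ≤ I^{(k)}`. Conversely `f_{j,k} j! ≤ 4^k k!`, so if
`G^{(j)} ≤ c C^j j!` every one of the `k + 1` terms of `F_k` is at most `4^k k! r^{2k-1} c C^k`,
and dividing by `k! r^{k-1}` gives `I^{(k)} ≤ c (8 r C)^k`.
-/

open Finset

/-- The coefficients `f_{j,k}` (for `0 ≤ j ≤ k`, and `0` out of range), defined by
`f_{0,k} = k!`, `f_{k,k} = 1` and `f_{j,k+1} = f_{j-1,k} + (k+j+1) f_{j,k}` for `1 ≤ j ≤ k`. -/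
def fCoeff : ℕ → ℕ → ℕ
  | 0, k => Nat.factorial k
  | _ + 1, 0 => 0
  | j + 1, k + 1 =>
      if j + 1 ≤ k then fCoeff j k + (k + j + 2) * fCoeff (j + 1) k
      else if j = k then 1 else 0

def ExpBounded (u : ℕ → ℝ) : Prop :=
  ∃ c C : ℝ, 0 ≤ c ∧ 1 < C ∧ ∀ k, u k ≤ c * C ^ k

lemma ExpBounded.of_one_le {u : ℕ → ℝ} {c C : ℝ} (hc : 0 ≤ c) (hC : 1 < C)
    (h : ∀ k, 1 ≤ k → u k ≤ c * C ^ k) : ExpBounded u := by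
  refine ⟨c + |u 0|, C, by positivity, hC, fun k => ?_⟩
  rcases Nat.eq_zero_or_pos k with rfl | hk
  · simpa using le_add_of_nonneg_of_le hc (le_abs_self (u 0))
  · calc u k ≤ c * C ^ k := h k hk
      _ ≤ (c + |u 0|) * C ^ k := by gcongr; exact le_add_of_nonneg_right (abs_nonneg _)

lemma ExpBounded.mono {u v : ℕ → ℝ} (hv : ExpBounded v) (h : ∀ k, 1 ≤ k → u k ≤ v k) :
    ExpBounded u :=
  let ⟨_, _, hc, hC, hv⟩ := hv
  .of_one_le hc hC fun k hk => (h k hk).trans (hv k)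

lemma fCoeff_self (k : ℕ) : fCoeff k k = 1 := by
  cases k <;> simp [fCoeff]

lemma fCoeff_mul_factorial_le (j k : ℕ) : fCoeff j k * j.factorial ≤ 4 ^ k * k.factorial := by
  induction k generalizing j with
  | zero => cases j <;> simp [fCoeff]
  | succ k ih =>
    cases j with
    | zero => simpa [fCoeff] using Nat.le_mul_of_pos_left _ (by positivity)
    | succ j =>
      rw [fCoeff]
      split_ifs with hjk hjk'
      · calc (fCoeff j k + (k + j + 2) * fCoeff (j + 1) k) * (j + 1).factorial
            = (j + 1) * (fCoeff j k * j.factorial)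
              + (k + j + 2) * (fCoeff (j + 1) k * (j + 1).factorial) := by
                rw [Nat.factorial_succ]; ring
          _ ≤ (j + 1) * (4 ^ k * k.factorial) + (k + j + 2) * (4 ^ k * k.factorial) :=
                add_le_add (Nat.mul_le_mul_left _ (ih j)) (Nat.mul_le_mul_left _ (ih (j + 1)))
          _ ≤ 4 * (k + 1) * (4 ^ k * k.factorial) := by rw [← add_mul]; gcongr; omega
          _ = 4 ^ (k + 1) * (k + 1).factorial := by rw [Nat.factorial_succ]; ring
      · subst hjk'
        simpa using Nat.le_mul_of_pos_left _ (by positivity)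
      · simp

section fCoeffSum

variable {r : ℝ} {g : ℕ → ℝ}

lemma pow_mul_le_sum_fCoeff (hr : 1 ≤ r) (hg : ∀ j, 0 ≤ g j) (k : ℕ) :
    r ^ (k - 1) * g k ≤ ∑ j ∈ range (k + 1), (fCoeff j k : ℝ) * r ^ (k + j - 1) * g j := by
  have hr0 : 0 ≤ r := zero_le_one.trans hr
  calc r ^ (k - 1) * g k ≤ (fCoeff k k : ℝ) * r ^ (k + k - 1) * g k := by
        rw [fCoeff_self, Nat.cast_one, one_mul]
        gcongr
        · exact hg k
        · omega
    _ ≤ _ := single_le_sum (f := fun j => (fCoeff j k : ℝ) * r ^ (k + j - 1) * g j)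
        (fun j _ => by have := hg j; positivity) (self_mem_range_succ k)

lemma sum_fCoeff_le_of_le_factorial {c C : ℝ} (hr : 1 ≤ r) (hc : 0 ≤ c) (hC : 1 ≤ C)
    (hg : ∀ j, g j ≤ c * C ^ j * j.factorial) {k : ℕ} (hk : 1 ≤ k) :
    ∑ j ∈ range (k + 1), (fCoeff j k : ℝ) * r ^ (k + j - 1) * g j
      ≤ k.factorial * r ^ (k - 1) * (c * (8 * r * C) ^ k) := by
  have hr0 : 0 ≤ r := zero_le_one.trans hr
  have hterm : ∀ j ∈ range (k + 1), (fCoeff j k : ℝ) * r ^ (k + j - 1) * g j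
      ≤ 4 ^ k * k.factorial * r ^ (2 * k - 1) * (c * C ^ k) := by
    intro j hj
    have hjk : j ≤ k := Nat.lt_succ_iff.mp (mem_range.mp hj)
    have hf : (fCoeff j k : ℝ) * j.factorial ≤ 4 ^ k * k.factorial := by
      exact_mod_cast fCoeff_mul_factorial_le j k
    calc (fCoeff j k : ℝ) * r ^ (k + j - 1) * g j
        ≤ (fCoeff j k : ℝ) * r ^ (k + j - 1) * (c * C ^ j * j.factorial) := by gcongr; exact hg j
      _ = (fCoeff j k * j.factorial) * r ^ (k + j - 1) * (c * C ^ j) := by ring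
      _ ≤ 4 ^ k * k.factorial * r ^ (2 * k - 1) * (c * C ^ k) := by
        gcongr
        omega
  have hk2 : (k : ℝ) + 1 ≤ 2 ^ k := by exact_mod_cast Nat.lt_two_pow_self (n := k)
  calc ∑ j ∈ range (k + 1), (fCoeff j k : ℝ) * r ^ (k + j - 1) * g j
      ≤ (k + 1) * (4 ^ k * k.factorial * r ^ (2 * k - 1) * (c * C ^ k)) := by
        simpa using sum_le_sum hterm
    _ ≤ 2 ^ k * (4 ^ k * k.factorial * r ^ (2 * k - 1) * (c * C ^ k)) := by gcongr
    _ = k.factorial * r ^ (k - 1) * (c * (8 * r * C) ^ k) := by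
        rw [show 2 * k - 1 = (k - 1) + k by omega, pow_add, show (8 : ℝ) = 2 * 4 by norm_num,
          mul_pow, mul_pow, mul_pow]
        ring

end fCoeffSum

theorem derivatives_subexponential_iff_general (r : ℝ) (hr : 1 ≤ r)
    (Gd I F : ℕ → ℝ) (hGd : ∀ j, 0 ≤ Gd j)
    (hF : ∀ k, 1 ≤ k →
      F k = ∑ j ∈ Finset.range (k + 1), (fCoeff j k : ℝ) * r ^ (k + j - 1) * Gd j)
    (hFI : ∀ k, 1 ≤ k → F k = (Nat.factorial k : ℝ) * r ^ (k - 1) * I k) :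
    (∃ c₁ C₁ : ℝ, 0 ≤ c₁ ∧ 1 < C₁ ∧ ∀ k : ℕ, Gd k / (Nat.factorial k : ℝ) ≤ c₁ * C₁ ^ k) ↔
    (∃ c₂ C₂ : ℝ, 0 ≤ c₂ ∧ 1 < C₂ ∧ ∀ k : ℕ, I k ≤ c₂ * C₂ ^ k) := by
  have hsum : ∀ k, 1 ≤ k → (k.factorial : ℝ) * r ^ (k - 1) * I k
      = ∑ j ∈ range (k + 1), (fCoeff j k : ℝ) * r ^ (k + j - 1) * Gd j :=
    fun k hk => (hFI k hk).symm.trans (hF k hk)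
  have hpos : ∀ k, 0 < (k.factorial : ℝ) * r ^ (k - 1) := fun k => by
    have := k.factorial_pos; have : (0 : ℝ) < r := by linarith
    positivity
  change ExpBounded _ ↔ ExpBounded _
  constructor
  · rintro ⟨c, C, hc, hC, hG⟩
    have hG' : ∀ j, Gd j ≤ c * C ^ j * j.factorial := fun j =>
      (div_le_iff₀ (by exact_mod_cast j.factorial_pos)).mp (hG j)
    refine .of_one_le (C := 8 * r * C) hc (by nlinarith) fun k hk =>
      le_of_mul_le_mul_left ?_ (hpos k)
    rw [hsum k hk]
    exact sum_fCoeff_le_of_le_factorial hr hc hC.le hG' hk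
  · refine fun hI => hI.mono fun k hk => ?_
    rw [div_le_iff₀' (by exact_mod_cast k.factorial_pos)]
    refine le_of_mul_le_mul_left ?_ (pow_pos (by linarith : (0 : ℝ) < r) (k - 1))
    calc r ^ (k - 1) * Gd k ≤ _ := pow_mul_le_sum_fCoeff hr hGd k
      _ = r ^ (k - 1) * (k.factorial * I k) := by rw [← hsum k hk]; ring

/-- Suppose `Gd j ≥ 0` plays the role of `G^{(j)}(r)` for a power series with non-negative
coefficients, `r ≥ 1`, `F k = Σ_{j=0}^k f_{j,k} r^{k+j-1} Gd j` and
`F k = k! r^{k-1} I k` for non-negative quantities `I k` (for every `k ≥ 1`).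
Then `Gd k / k!` grows at most exponentially in `k` iff `I k` does. -/
theorem derivatives_subexponential_iff (r : ℝ) (hr : 1 ≤ r)
    (Gd I F : ℕ → ℝ) (hGd : ∀ j, 0 ≤ Gd j) (hI : ∀ k, 0 ≤ I k)
    (hF : ∀ k, 1 ≤ k →
      F k = ∑ j ∈ Finset.range (k + 1), (fCoeff j k : ℝ) * r ^ (k + j - 1) * Gd j)
    (hFI : ∀ k, 1 ≤ k → F k = (Nat.factorial k : ℝ) * r ^ (k - 1) * I k) :
    (∃ c₁ C₁ : ℝ, 0 ≤ c₁ ∧ 1 < C₁ ∧ ∀ k : ℕ, Gd k / (Nat.factorial k : ℝ) ≤ c₁ * C₁ ^ k) ↔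
    (∃ c₂ C₂ : ℝ, 0 ≤ c₂ ∧ 1 < C₂ ∧ ∀ k : ℕ, I k ≤ c₂ * C₂ ^ k) :=
  derivatives_subexponential_iff_general r hr Gd I F hGd hF hFI
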